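/- Let G ≤ H be finite groups and X a finite G-set, and let Δ_K ⊂ Yⁿ denote the 'big K-diagonal' of n-tuples with at least two coordinates in the same K-orbit. Then (ind_G^H X)ⁿ \ Δ_H is H_n-equivariantly isomorphic to ind_{G_n}^{H_n}(Xⁿ \ Δ_G), where G_n, H_n are the wreath products acting on the Cartesian powers. -/

import Mathlib

section Ind
variable {K H : Type*} [Group K] [Group H]

/-- The equivalence relation on `H × X` defining the induced `H`-set of a `K`-set `X`
along a homomorphism `f : K →* H`:
`(h₁,x₁) ∼ (h₂,x₂)` iff `∃ g, h₂ = h₁ (f g)⁻¹` and `x₂ = g • x₁`. -/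
def indSetoid (f : K →* H) (X : Type*) [MulAction K X] : Setoid (H × X) where
  r p q := ∃ g : K, q.1 = p.1 * (f g)⁻¹ ∧ q.2 = g • p.2
  iseqv := by
    constructor
    · exact fun p => ⟨1, by simp⟩
    · rintro p q ⟨g, h1, h2⟩
      exact ⟨g⁻¹, by simp [h1, mul_assoc], by simp [h2]⟩
    · rintro p q r ⟨g, h1, h2⟩ ⟨g', h1', h2'⟩
      exact ⟨g' * g, by simp [h1, h1', mul_assoc], by simp [h2, h2', mul_smul]⟩

/-- The induced `H`-set `ind_K^H X = (H × X)/∼`. -/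
def Ind (f : K →* H) (X : Type*) [MulAction K X] : Type _ := Quotient (indSetoid f X)

/-- `H` acts on the induced set by left multiplication on the first coordinate. -/
instance Ind.mulAction (f : K →* H) (X : Type*) [MulAction K X] :
    MulAction H (Ind f X) where
  smul h := Quotient.map (fun p => (h * p.1, p.2))
    (by rintro p q ⟨g, h1, h2⟩; exact ⟨g, by simp [h1, mul_assoc], h2⟩)
  one_smul x := by
    refine Quotient.inductionOn x (fun p => ?_)
    show Quotient.map _ _ _ = _
    simp
  mul_smul a b x := by
    refine Quotient.inductionOn x (fun p => ?_)
    show Quotient.map _ _ _ = Quotient.map _ _ (Quotient.map _ _ _)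
    simp [mul_assoc]

end Ind
section Wreath

variable (G : Type*) [Group G] (ι : Type*)

/-- Permutations of `ι` act on `ι → G` by automorphisms (permuting the factors). -/
def permAut : Equiv.Perm ι →* MulAut (ι → G) where
  toFun σ :=
    { toEquiv := Equiv.arrowCongr σ (Equiv.refl G)
      map_mul' := fun v w => rfl }
  map_one' := by ext v i; rfl
  map_mul' σ τ := by ext v i; rfl

/-- The wreath product `G_ι = G^ι ⋊ Perm ι`. -/
def Wr : Type _ := (ι → G) ⋊[permAut G ι] Equiv.Perm ι

instance : Group (Wr G ι) := inferInstanceAs (Group ((ι → G) ⋊[permAut G ι] Equiv.Perm ι))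

variable {G ι}

/-- The `G^ι`-component of an element of the wreath product. -/
def Wr.l (w : Wr G ι) : ι → G := SemidirectProduct.left w

/-- The `Perm ι`-component of an element of the wreath product. -/
def Wr.p (w : Wr G ι) : Equiv.Perm ι := SemidirectProduct.right w

/-- Building an element of the wreath product from its two components. -/
def Wr.mk (v : ι → G) (σ : Equiv.Perm ι) : Wr G ι := ⟨v, σ⟩

@[simp] lemma Wr.l_mk (v : ι → G) (σ : Equiv.Perm ι) : (Wr.mk v σ).l = v := rfl
@[simp] lemma Wr.p_mk (v : ι → G) (σ : Equiv.Perm ι) : (Wr.mk v σ).p = σ := rfl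
@[simp] lemma Wr.l_one : (1 : Wr G ι).l = 1 := rfl
@[simp] lemma Wr.p_one : (1 : Wr G ι).p = 1 := rfl
@[simp] lemma Wr.l_mul (a b : Wr G ι) : (a * b).l = a.l * fun i => b.l (a.p.symm i) := rfl
@[simp] lemma Wr.p_mul (a b : Wr G ι) : (a * b).p = a.p * b.p := rfl

variable (G ι)

/-- The natural action of the wreath product `G_ι` on `X^ι`:
`S_ι` permutes the factors and `G^ι` acts componentwise. -/
instance wrAction (X : Type*) [MulAction G X] : MulAction (Wr G ι) (ι → X) where
  smul w y := fun i => w.l i • y (w.p.symm i)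
  one_smul y := funext fun i => by
    show (1 : Wr G ι).l i • y ((1 : Wr G ι).p.symm i) = y i
    simp; rfl
  mul_smul a b y := funext fun i => by
    show (a * b).l i • y ((a * b).p.symm i) =
      a.l i • b.l (a.p.symm i) • y (b.p.symm (a.p.symm i))
    rw [Wr.l_mul, Wr.p_mul, Pi.mul_apply, mul_smul]
    rfl

@[simp] lemma wr_smul_apply {X : Type*} [MulAction G X] (w : Wr G ι) (y : ι → X) (i : ι) :
    (w • y) i = w.l i • y (w.p.symm i) := rfl

end Wreath
section WreathHoms

@[simp] lemma Wr.mk_mul {G : Type*} [Group G] {ι : Type*} (v w : ι → G)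
    (σ τ : Equiv.Perm ι) :
    Wr.mk v σ * Wr.mk w τ = Wr.mk (fun i => v i * w (σ.symm i)) (σ * τ) := rfl

@[simp] lemma Wr.left_mk {G : Type*} [Group G] {ι : Type*} (v : ι → G) (σ : Equiv.Perm ι) :
    SemidirectProduct.left (Wr.mk v σ) = v := rfl

@[simp] lemma Wr.right_mk {G : Type*} [Group G] {ι : Type*} (v : ι → G) (σ : Equiv.Perm ι) :
    SemidirectProduct.right (Wr.mk v σ) = σ := rfl

variable (G : Type*) [Group G]

/-- The natural embedding `G_ι × G_κ → G_{ι ⊕ κ}` of wreath products. -/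
def wrJoin (ι κ : Type*) : Wr G ι × Wr G κ →* Wr G (ι ⊕ κ) where
  toFun p := Wr.mk (Sum.elim p.1.l p.2.l) (Equiv.Perm.sumCongrHom ι κ (p.1.p, p.2.p))
  map_one' := by
    apply SemidirectProduct.ext
    · funext i; cases i <;> rfl
    · show Equiv.Perm.sumCongrHom ι κ (1, 1) = 1
      exact map_one _
  map_mul' p q := by
    show Wr.mk _ _ = Wr.mk _ _ * Wr.mk _ _
    rw [Wr.mk_mul]
    apply SemidirectProduct.ext
    · funext i
      cases i with
      | inl a =>
          show (p.1.l * fun i => q.1.l (p.1.p.symm i)) a = _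
          simp [Equiv.Perm.sumCongrHom]
      | inr b =>
          show (p.2.l * fun i => q.2.l (p.2.p.symm i)) b = _
          simp [Equiv.Perm.sumCongrHom]
    · exact map_mul (Equiv.Perm.sumCongrHom ι κ) (p.1.p, p.2.p) (q.1.p, q.2.p)

/-- Transport of wreath products along a bijection of index sets. -/
def wrCongrHom {ι κ : Type*} (e : ι ≃ κ) : Wr G ι →* Wr G κ where
  toFun w := Wr.mk (w.l ∘ e.symm) (e.permCongr w.p)
  map_one' := by
    apply SemidirectProduct.ext
    · rfl
    · show e.permCongr 1 = 1
      ext x; simp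
  map_mul' a b := by
    show Wr.mk _ _ = Wr.mk _ _ * Wr.mk _ _
    rw [Wr.mk_mul]
    apply SemidirectProduct.ext
    · funext i
      show (a.l * fun i => b.l (a.p.symm i)) (e.symm i) = _
      simp [Equiv.permCongr, Equiv.equivCongr]
    · ext x
      simp [Equiv.permCongr, Equiv.equivCongr, Equiv.Perm.mul_apply]

/-- The homomorphism of wreath products `K_ι → H_ι` induced by `f : K →* H`. -/
def wrMapHom {K H : Type*} [Group K] [Group H] (f : K →* H) (ι : Type*) :
    Wr K ι →* Wr H ι where
  toFun w := Wr.mk (f ∘ w.l) w.p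
  map_one' := by
    apply SemidirectProduct.ext
    · funext i; exact map_one f
    · rfl
  map_mul' a b := by
    show Wr.mk _ _ = Wr.mk _ _ * Wr.mk _ _
    rw [Wr.mk_mul]
    apply SemidirectProduct.ext
    · funext i
      show f ((a.l * fun i => b.l (a.p.symm i)) i) = _
      simp
    · rfl

variable (ι : Type*)

/-- The big `G`-diagonal in `X^ι`: tuples with two coordinates in the same `G`-orbit. -/
def bigDiag (X : Type*) [MulAction G X] : Set (ι → X) :=
  {y | ∃ i j, i ≠ j ∧ y i ∈ MulAction.orbit G (y j)}

/-- The wreath product `G_ι` acts on the complement of the big diagonal in `X^ι`. -/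
instance wrDiagAction (X : Type*) [MulAction G X] :
    MulAction (Wr G ι) {y : ι → X // y ∉ bigDiag G ι X} where
  smul w y := ⟨w • (y : ι → X), by
    rintro ⟨i, j, hij, g, hg⟩
    apply y.2
    refine ⟨w.p.symm i, w.p.symm j, fun h => hij (by simpa using congrArg w.p h), ?_⟩
    refine ⟨(w.l i)⁻¹ * g * w.l j, ?_⟩
    have hg' : g • (w.l j • (y : ι → X) (w.p.symm j)) = w.l i • (y : ι → X) (w.p.symm i) := hg
    calc ((w.l i)⁻¹ * g * w.l j) • (y : ι → X) (w.p.symm j)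
        = (w.l i)⁻¹ • g • w.l j • (y : ι → X) (w.p.symm j) := by
          rw [mul_smul, mul_smul]
      _ = (y : ι → X) (w.p.symm i) := by rw [hg', inv_smul_smul]⟩
  one_smul y := Subtype.ext (one_smul _ (y : ι → X))
  mul_smul a b y := Subtype.ext (mul_smul a b (y : ι → X))

end WreathHoms

/-!
Every point of `ind_K^H X` is a translate `h • of x` of a point of `X`, and two points `of x`,
`of y` are in the same `H`-orbit exactly when `x`, `y` are in the same `K`-orbit. Hence a tuple
in `(ind_K^H X)^ι` off the big `H`-diagonal is `w • (of ∘ x)` for some `w ∈ H_ι` and some `x`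
off the big `K`-diagonal, and the pair `(w, x)` is unique up to the action of `K_ι`: this is
precisely a point of `ind_{K_ι}^{H_ι}(X^ι \ Δ_K)`.
-/

namespace Ind

variable {K H : Type*} [Group K] [Group H] {f : K →* H} {X : Type*} [MulAction K X]

variable (f) in
def mk (p : H × X) : Ind f X := Quotient.mk (indSetoid f X) p

variable (f) in
def of (x : X) : Ind f X := mk f (1, x)

lemma mk_eq_mk_iff {p q : H × X} :
    mk f p = mk f q ↔ ∃ g : K, q.1 = p.1 * (f g)⁻¹ ∧ q.2 = g • p.2 :=
  Quotient.eq

lemma smul_mk (h : H) (p : H × X) : h • mk f p = mk f (h * p.1, p.2) := rfl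

lemma smul_of (h : H) (x : X) : h • of f x = mk f (h, x) := by
  rw [of, smul_mk, mul_one]

lemma of_smul (g : K) (x : X) : of f (g • x) = f g • of f x := by
  rw [smul_of]
  exact Quotient.sound ⟨g⁻¹, by simp, by simp⟩

lemma exists_smul_of (z : Ind f X) : ∃ (h : H) (x : X), h • of f x = z :=
  Quotient.inductionOn z fun ⟨h, x⟩ => ⟨h, x, smul_of h x⟩

lemma smul_of_eq_of_iff {h : H} {x y : X} :
    h • of f x = of f y ↔ ∃ g : K, f g = h ∧ y = g • x := by
  rw [smul_of, of, mk_eq_mk_iff]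
  exact exists_congr fun g => and_congr_left' (by rw [eq_comm, mul_inv_eq_one, eq_comm])

lemma of_mem_orbit_iff {x y : X} :
    of f y ∈ MulAction.orbit H (of f x) ↔ y ∈ MulAction.orbit K x := by
  simp only [MulAction.mem_orbit_iff, smul_of_eq_of_iff]
  constructor
  · rintro ⟨-, g, -, rfl⟩
    exact ⟨g, rfl⟩
  · rintro ⟨g, rfl⟩
    exact ⟨f g, g, rfl, rfl⟩

variable (ι : Type*)

lemma wrMapHom_smul_comp_of (γ : Wr K ι) (x : ι → X) :
    wrMapHom f ι γ • (of f ∘ x) = of f ∘ (γ • x) :=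
  funext fun i => (of_smul (γ.l i) (x (γ.p.symm i))).symm

lemma comp_of_mem_bigDiag_iff (x : ι → X) :
    of f ∘ x ∈ bigDiag H ι (Ind f X) ↔ x ∈ bigDiag K ι X := by
  simp only [bigDiag, Set.mem_ofPred_eq, Function.comp_apply, of_mem_orbit_iff]

lemma exists_wrMapHom_eq_of_smul_comp_of_eq {u : Wr H ι} {x x' : ι → X}
    (hu : u • (of f ∘ x) = of f ∘ x') : ∃ γ : Wr K ι, wrMapHom f ι γ = u ∧ x' = γ • x := by
  choose g hg hx using fun i => smul_of_eq_of_iff.mp (congrFun hu i)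
  exact ⟨Wr.mk g u.p, SemidirectProduct.ext (funext hg) rfl, funext hx⟩

variable (f X)

def toOffDiag :
    Ind (wrMapHom f ι) {x : ι → X // x ∉ bigDiag K ι X} →
      {y : ι → Ind f X // y ∉ bigDiag H ι (Ind f X)} :=
  Quotient.lift (fun p => p.1 • ⟨of f ∘ p.2.1, (comp_of_mem_bigDiag_iff ι _).not.mpr p.2.2⟩) (by
    rintro ⟨w, x⟩ ⟨_, _⟩ ⟨γ, hw, hx⟩
    dsimp only at hw hx
    subst hw hx
    apply Subtype.ext
    show w • (of f ∘ x.1) = (w * (wrMapHom f ι γ)⁻¹) • (of f ∘ (γ • x.1))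
    rw [← wrMapHom_smul_comp_of, ← mul_smul, inv_mul_cancel_right])

variable {f X}

lemma coe_toOffDiag_mk (w : Wr H ι) (x : {x : ι → X // x ∉ bigDiag K ι X}) :
    (toOffDiag f X ι (mk _ (w, x)) : ι → Ind f X) = w • (of f ∘ x.1) := rfl

lemma toOffDiag_smul (w : Wr H ι) (z : Ind (wrMapHom f ι) {x : ι → X // x ∉ bigDiag K ι X}) :
    toOffDiag f X ι (w • z) = w • toOffDiag f X ι z :=
  Quotient.inductionOn z fun _ => mul_smul _ _ _

lemma toOffDiag_injective : Function.Injective (toOffDiag f X ι) := by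
  intro z z'
  refine Quotient.inductionOn₂ z z' fun ⟨w, x⟩ ⟨w', x'⟩ hzz' => ?_
  have hcoe : w • (of f ∘ x.1) = w' • (of f ∘ x'.1) := congrArg Subtype.val hzz'
  obtain ⟨γ, hγ, hx⟩ := exists_wrMapHom_eq_of_smul_comp_of_eq ι (u := w'⁻¹ * w)
    (by rw [mul_smul, hcoe, inv_smul_smul])
  exact Quotient.sound ⟨γ, by rw [hγ]; group, Subtype.ext hx⟩

lemma toOffDiag_surjective : Function.Surjective (toOffDiag f X ι) := by
  rintro ⟨y, hy⟩
  choose h x hhx using fun i => exists_smul_of (y i)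
  have hy' : of f ∘ x = (Wr.mk h 1)⁻¹ • y := by
    rw [eq_inv_smul_iff]
    exact funext hhx
  have hx : x ∉ bigDiag K ι X := by
    rw [← comp_of_mem_bigDiag_iff (f := f), hy']
    exact ((Wr.mk h 1)⁻¹ • (⟨y, hy⟩ : {y // y ∉ bigDiag H ι (Ind f X)})).2
  refine ⟨mk _ (Wr.mk h 1, ⟨x, hx⟩), Subtype.ext ?_⟩
  rw [coe_toOffDiag_mk, hy', smul_inv_smul]

end Ind

theorem power_of_induced_minus_diagonal_is_induced_general
    (H : Type) [Group H] (G : Subgroup H) (X : Type) [MulAction G X]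
    (n : ℕ) :
    ∃ e : {y : Fin n → Ind G.subtype X // y ∉ bigDiag H (Fin n) (Ind G.subtype X)} ≃
        Ind (wrMapHom G.subtype (Fin n)) {y : Fin n → X // y ∉ bigDiag G (Fin n) X},
      ∀ (w : Wr H (Fin n)) y, e (w • y) = w • e y := by
  let e := Equiv.ofBijective _ ⟨Ind.toOffDiag_injective (f := G.subtype) (X := X) (Fin n),
    Ind.toOffDiag_surjective (Fin n)⟩
  refine ⟨e.symm, fun w y => e.symm_apply_eq.mpr ?_⟩
  show _ = Ind.toOffDiag _ _ _ (w • e.symm y)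
  rw [Ind.toOffDiag_smul]
  exact congrArg (w • ·) (e.apply_symm_apply y).symm

theorem power_of_induced_minus_diagonal_is_induced
    (H : Type) [Group H] [Finite H] (G : Subgroup H) (X : Type) [MulAction G X] [Finite X]
    (n : ℕ) :
    ∃ e : {y : Fin n → Ind G.subtype X // y ∉ bigDiag H (Fin n) (Ind G.subtype X)} ≃
        Ind (wrMapHom G.subtype (Fin n)) {y : Fin n → X // y ∉ bigDiag G (Fin n) X},
      ∀ (w : Wr H (Fin n)) y, e (w • y) = w • e y :=
  power_of_induced_minus_diagonal_is_induced_general H G X n
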